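/- The 3-cocycle ω(a,b,c) = (-1)^(a.val * b.val * c.val) on ZMod 2 with values in U(1) is not a 3-coboundary; that is, there is no function f : ZMod 2 × ZMod 2 → ℂ with values in unit complex numbers such that ω(a,b,c) = f(b,c) * f(a, b+c) * (f(a+b,c))⁻¹ * (f(a,b))⁻¹ for all a,b,c. -/

import Mathlib

theorem stmt_7 (ω : ZMod 2 → ZMod 2 → ZMod 2 → ℂ)
    (hω : ∀ a b c : ZMod 2, ω a b c = (-1 : ℂ) ^ (a.val * b.val * c.val)) :
    ¬ ∃ f : ZMod 2 → ZMod 2 → ℂ,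
      (∀ a b : ZMod 2, ‖f a b‖ = 1) ∧
      (∀ a b c : ZMod 2,
        ω a b c = f b c * f a (b + c) * (f (a + b) c)⁻¹ * (f a b)⁻¹) := by
  rintro ⟨f, habs, h⟩
  have hne : ∀ a b : ZMod 2, f a b ≠ 0 := by
    intro a b hz
    have := habs a b
    rw [hz] at this
    simp at this
  have h1 := h 1 1 1
  have h2 := h 1 1 0
  have h3 := h 0 1 1
  rw [hω] at h1 h2 h3
  have e : (1:ZMod 2) + 1 = 0 := by decide
  have e0 : (1:ZMod 2) + 0 = 1 := by decide
  have e1 : (0:ZMod 2) + 1 = 1 := by decide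
  rw [e, e0] at h2
  rw [e] at h1 h3
  rw [e1] at h3
  norm_num [show (ZMod.val (1 : ZMod 2)) = 1 from rfl,
    show (ZMod.val (0 : ZMod 2)) = 0 from rfl] at h1 h2 h3
  have n00 := hne 0 0
  have n01 := hne 0 1
  have n10 := hne 1 0
  have n11 := hne 1 1
  field_simp at h1 h2 h3
  rcases (Or.inl h2 : f 0 0 = f 1 0 ∨ f 1 1 = 0) with h2 | h2
  · apply n01
    have h1' : f 1 1 * (-(f 0 1)) = f 1 1 * f 1 0 := by linear_combination (f 1 1) * h1
    have key : f 1 0 = -(f 0 1) := (mul_left_cancel₀ n11 h1').symm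
    have : f 0 1 = -(f 0 1) := h3.trans (h2.trans key)
    linear_combination this / 2
  · exact n11 h2
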